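/- arXiv:1707.00494 — 7 statements merged into one kernel-verified Lean document; each statement's English description precedes it below -/
import Mathlib

section
/- Let φ be a locally finite collection of compact subsets of ℝ^d and let ψ, ψ' ⊆ φ be two hard-core subcollections (the interiors of distinct members are pairwise disjoint) that are both locally h-maximal thinnings of φ, for a function h : compact sets → [0,∞). Then every connected component of the contact graph on the symmetric difference ψ Δ ψ' (vertices are grains, edges join intersecting grains) is infinite. -/
open scoped BigOperators symmDiff

/-- A collection of grains satisfies the hard-core constraint if the interiors of
distinct members are pairwise disjoint. -/
def HardCore {E : Type*} [TopologicalSpace E] (ψ : Set (Set E)) : Prop :=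
  ∀ K ∈ ψ, ∀ L ∈ ψ, K ≠ L → interior K ∩ interior L = ∅

/-- `ψ` is a locally `h`-maximal hard-core thinning of `φ`. -/
def LocallyHMax {E : Type*} [TopologicalSpace E] (h : Set E → ℝ)
    (φ ψ : Set (Set E)) : Prop :=
  ψ ⊆ φ ∧ HardCore ψ ∧
    ∀ ψ' : Set (Set E), ψ' ⊆ φ → HardCore ψ' → (ψ ∆ ψ').Finite → ψ' ≠ ψ →
      ∑ᶠ K ∈ (ψ' \ ψ), h K < ∑ᶠ K ∈ (ψ \ ψ'), h K

/-- Connectivity in the contact graph of a collection `σ`: grains are vertices,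
and intersecting grains are joined by an edge. -/
def ContactConn {E : Type*} (σ : Set (Set E)) (K L : Set E) : Prop :=
  Relation.ReflTransGen (fun A B => A ∈ σ ∧ B ∈ σ ∧ (A ∩ B).Nonempty) K L

/-- A collection of grains is locally finite if only finitely many grains meet
each bounded region. -/
def LocFinite {d : ℕ} (φ : Set (Set (EuclideanSpace ℝ (Fin d)))) : Prop :=
  ∀ R : ℝ, {K ∈ φ | (K ∩ Metric.closedBall 0 R).Nonempty}.Finite

/-- Key swap lemma: if `ψ` is locally `h`-maximal, `ψ'` is a hard-core subset of `φ`,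
and `C` is a finite nonempty subset of `ψ ∆ ψ'` closed under contact within `ψ ∆ ψ'`,
then swapping on `C` yields a strict inequality. -/
lemma key_swap {E : Type*} [TopologicalSpace E] (h : Set E → ℝ)
    (φ ψ ψ' : Set (Set E)) (hψ : LocallyHMax h φ ψ)
    (hψ'sub : ψ' ⊆ φ) (hψ'hc : HardCore ψ')
    (C : Set (Set E)) (hCfin : C.Finite) (hCsub : C ⊆ ψ ∆ ψ')
    (hCcl : ∀ A ∈ ψ ∆ ψ', ∀ B ∈ C, (A ∩ B).Nonempty → A ∈ C)
    (hCne : C.Nonempty) :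
    ∑ᶠ K ∈ (C ∩ (ψ' \ ψ)), h K < ∑ᶠ K ∈ (C ∩ (ψ \ ψ')), h K := by
  set ψ'' : Set (Set E) := (ψ \ C) ∪ (ψ' ∩ C) with hψ''def
  have hsub : ψ'' ⊆ φ := by
    rintro A (⟨hA, -⟩ | ⟨hA, -⟩)
    · exact hψ.1 hA
    · exact hψ'sub hA
  have aux : ∀ A ∈ ψ \ C, ∀ B ∈ ψ' ∩ C, interior A ∩ interior B = ∅ := by
    rintro A ⟨hAψ, hAC⟩ B ⟨hBψ', hBC⟩
    by_contra hne
    obtain ⟨x, hx⟩ := Set.nonempty_iff_ne_empty.mpr hne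
    have hAB : (A ∩ B).Nonempty := ⟨x, interior_subset hx.1, interior_subset hx.2⟩
    have hABne : A ≠ B := fun e => hAC (e ▸ hBC)
    by_cases hA' : A ∈ ψ ∆ ψ'
    · exact hAC (hCcl A hA' B hBC hAB)
    · have hAψ' : A ∈ ψ' := by
        rw [Set.mem_symmDiff] at hA'
        push_neg at hA'
        exact hA'.1 hAψ
      have := hψ'hc A hAψ' B hBψ' hABne
      rw [this] at hx
      exact hx
  have hhc : HardCore ψ'' := by
    rintro A hA B hB hAB
    rcases hA with hA | hA <;> rcases hB with hB | hB
    · exact hψ.2.1 A hA.1 B hB.1 hAB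
    · exact aux A hA B hB
    · rw [Set.inter_comm]; exact aux B hB A hA
    · exact hψ'hc A hA.1 B hB.1 hAB
  have hsd : ψ ∆ ψ'' = C := by
    ext A
    by_cases hAC : A ∈ C
    · simp only [iff_true, hAC]
      have := hCsub hAC
      rw [Set.mem_symmDiff] at this ⊢
      rcases this with ⟨hA1, hA2⟩ | ⟨hA1, hA2⟩
      · left
        refine ⟨hA1, ?_⟩
        rintro (⟨-, hc⟩ | ⟨hc, -⟩)
        · exact hc hAC
        · exact hA2 hc
      · right
        exact ⟨Or.inr ⟨hA1, hAC⟩, hA2⟩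
    · simp only [iff_false, hAC]
      rw [Set.mem_symmDiff]
      rintro (⟨hA1, hA2⟩ | ⟨hA1, hA2⟩)
      · exact hA2 (Or.inl ⟨hA1, hAC⟩)
      · rcases hA1 with ⟨hc, -⟩ | ⟨-, hc⟩
        · exact hA2 hc
        · exact hAC hc
  have hfin : (ψ ∆ ψ'').Finite := hsd ▸ hCfin
  obtain ⟨K₀, hK₀⟩ := hCne
  have hne : ψ'' ≠ ψ := by
    intro heq
    have := hCsub hK₀
    rw [Set.mem_symmDiff] at this
    rcases this with ⟨hA1, hA2⟩ | ⟨hA1, hA2⟩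
    · have : K₀ ∈ ψ'' := heq ▸ hA1
      rcases this with ⟨-, hc⟩ | ⟨hc, -⟩
      · exact hc hK₀
      · exact hA2 hc
    · have : K₀ ∈ ψ'' := Or.inr ⟨hA1, hK₀⟩
      exact hA2 (heq ▸ this)
  have hlt := hψ.2.2 ψ'' hsub hhc hfin hne
  have e1 : ψ'' \ ψ = C ∩ (ψ' \ ψ) := by
    ext A
    simp only [hψ''def, Set.mem_diff, Set.mem_union, Set.mem_inter_iff]
    tauto
  have e2 : ψ \ ψ'' = C ∩ (ψ \ ψ') := by
    ext A
    simp only [hψ''def, Set.mem_diff, Set.mem_union, Set.mem_inter_iff]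
    tauto
  rwa [e1, e2] at hlt

/-- if `ψ, ψ'` are two locally `h`-maximal hard-core thinnings of a
locally finite collection `φ` of compact sets, then every connected component of the
contact graph on `ψ ∆ ψ'` is infinite. -/
theorem disagreement_percolation {d : ℕ}
    (φ ψ ψ' : Set (Set (EuclideanSpace ℝ (Fin d))))
    (h : Set (EuclideanSpace ℝ (Fin d)) → ℝ) (hh : ∀ K, 0 ≤ h K)
    (hφ : LocFinite φ) (hcpt : ∀ K ∈ φ, IsCompact K)
    (hψ : LocallyHMax h φ ψ) (hψ' : LocallyHMax h φ ψ') :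
    ∀ K ∈ ψ ∆ ψ', {L ∈ ψ ∆ ψ' | ContactConn (ψ ∆ ψ') K L}.Infinite := by
  intro K hK
  by_contra hinf
  rw [Set.not_infinite] at hinf
  set C : Set (Set (EuclideanSpace ℝ (Fin d))) :=
    {L ∈ ψ ∆ ψ' | ContactConn (ψ ∆ ψ') K L} with hCdef
  have hCsub : C ⊆ ψ ∆ ψ' := fun L hL => hL.1
  have hKC : K ∈ C := ⟨hK, Relation.ReflTransGen.refl⟩
  have hCcl : ∀ A ∈ ψ ∆ ψ', ∀ B ∈ C, (A ∩ B).Nonempty → A ∈ C := by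
    intro A hA B hB hAB
    exact ⟨hA, hB.2.tail ⟨hB.1, hA, by rwa [Set.inter_comm]⟩⟩
  have hcomm : ψ' ∆ ψ = ψ ∆ ψ' := symmDiff_comm ψ' ψ
  have h1 := key_swap h φ ψ ψ' hψ hψ'.1 hψ'.2.1 C hinf hCsub hCcl ⟨K, hKC⟩
  have h2 := key_swap h φ ψ' ψ hψ' hψ.1 hψ.2.1 C hinf
    (hcomm ▸ hCsub) (hcomm ▸ hCcl) ⟨K, hKC⟩
  exact lt_asymm h1 h2
end

section
/- Let φ be a locally finite collection of compact subsets of ℝ^d, and suppose the union of the sets in φ decomposes into connected components, each containing only finitely many members of φ. Assume that for each connected component φ_i the h-values of distinct hard-core subsets of φ_i have distinct sums, and let φ_max be the union over i of the unique hard-core subset of φ_i maximizing the sum of h-values. Then φ_max is a locally h-maximal hard-core thinning of φ, and conversely every locally h-maximal hard-core thinning of φ equals φ_max. -/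
open scoped BigOperators symmDiff

/-- The connected component of the grain `K` in `φ`: equivalence class of grains under
the transitive closure of the intersection relation. -/
def Component {E : Type*} (φ : Set (Set E)) (K : Set E) : Set (Set E) :=
  {L ∈ φ | Relation.ReflTransGen (fun A B => A ∈ φ ∧ B ∈ φ ∧ (A ∩ B).Nonempty) K L}

/-!
Two grains with overlapping interiors intersect, so they lie in one component: hard-core
constraints, and hence every comparison of `h`-sums, decompose over the (finite) components.
A finite modification `ψ` of `φ_max` touches finitely many components; on each its `h`-sum is at
most that of `φ_max`, and strictly smaller on a component where the two differ, by distinctness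
of sums. Summing over components gives local maximality of `φ_max`. Conversely, if a locally
maximal `ψ` differed from `φ_max` on a component `C`, replacing `ψ ∩ C` by `φ_max ∩ C` would be a
finite hard-core modification that does not lower the `h`-sum.
-/

section Finsum

variable {α γ β : Type*} [AddCommMonoid β] [PartialOrder β] [IsOrderedCancelAddMonoid β]
  {f : α → β} {s t : Set α}

theorem finsum_mem_diff_le_finsum_mem_diff_iff (hs : s.Finite) (ht : t.Finite) :
    ∑ᶠ i ∈ s \ t, f i ≤ ∑ᶠ i ∈ t \ s, f i ↔ ∑ᶠ i ∈ s, f i ≤ ∑ᶠ i ∈ t, f i := by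
  classical
  lift s to Finset α using hs
  lift t to Finset α using ht
  simp only [← Finset.coe_sdiff, finsum_mem_coe_finset]
  exact Finset.sum_sdiff_le_sum_sdiff

theorem finsum_mem_diff_lt_finsum_mem_diff_iff (hs : s.Finite) (ht : t.Finite) :
    ∑ᶠ i ∈ s \ t, f i < ∑ᶠ i ∈ t \ s, f i ↔ ∑ᶠ i ∈ s, f i < ∑ᶠ i ∈ t, f i := by
  classical
  lift s to Finset α using hs
  lift t to Finset α using ht
  simp only [← Finset.coe_sdiff, finsum_mem_coe_finset]
  exact Finset.sum_sdiff_lt_sum_sdiff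

theorem finsum_mem_lt_finsum_mem_of_fiberwise (hs : s.Finite) (ht : t.Finite) (c : α → γ)
    (hle : ∀ x ∈ s ∪ t, ∑ᶠ i ∈ s ∩ c ⁻¹' {c x}, f i ≤ ∑ᶠ i ∈ t ∩ c ⁻¹' {c x}, f i)
    (hlt : ∃ x ∈ s ∪ t, ∑ᶠ i ∈ s ∩ c ⁻¹' {c x}, f i < ∑ᶠ i ∈ t ∩ c ⁻¹' {c x}, f i) :
    ∑ᶠ i ∈ s, f i < ∑ᶠ i ∈ t, f i := by
  classical
  lift s to Finset α using hs
  lift t to Finset α using ht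
  have hfiber (u : Finset α) (y : γ) :
      ∑ᶠ i ∈ (u : Set α) ∩ c ⁻¹' {y}, f i = ∑ i ∈ u with c i = y, f i := by
    rw [← finsum_mem_coe_finset, Finset.coe_filter]
    rfl
  simp only [hfiber, ← Finset.coe_union, Finset.mem_coe] at hle hlt
  rw [finsum_mem_coe_finset, finsum_mem_coe_finset]
  have hmaps (u : Finset α) (hu : u ⊆ s ∪ t) : ∀ i ∈ u, c i ∈ (s ∪ t).image c :=
    fun i hi => Finset.mem_image_of_mem c (hu hi)
  rw [← Finset.sum_fiberwise_of_maps_to (hmaps s Finset.subset_union_left),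
    ← Finset.sum_fiberwise_of_maps_to (hmaps t Finset.subset_union_right)]
  obtain ⟨x, hx, hxlt⟩ := hlt
  refine Finset.sum_lt_sum (fun y hy => ?_) ⟨c x, Finset.mem_image_of_mem c hx, hxlt⟩
  obtain ⟨x, hx, rfl⟩ := Finset.mem_image.1 hy
  exact hle x hx

end Finsum

section Component

variable {E : Type*} {φ ψ M s : Set (Set E)} {K L X : Set E}

theorem self_mem_component (hK : K ∈ φ) : K ∈ Component φ K :=
  ⟨hK, .refl⟩

theorem component_subset : Component φ K ⊆ φ :=
  fun _ hL => hL.1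

theorem mem_component_of_inter_nonempty (hK : K ∈ Component φ X) (hL : L ∈ φ)
    (hKL : (K ∩ L).Nonempty) : L ∈ Component φ X :=
  ⟨hL, hK.2.tail ⟨hK.1, hL, hKL⟩⟩

theorem component_eq_of_mem (hL : L ∈ Component φ K) : Component φ L = Component φ K := by
  have : Std.Symm fun A B : Set E => A ∈ φ ∧ B ∈ φ ∧ (A ∩ B).Nonempty :=
    ⟨fun A B ⟨hA, hB, hAB⟩ => ⟨hB, hA, Set.inter_comm A B ▸ hAB⟩⟩
  ext Y
  exact ⟨fun ⟨hY, hLY⟩ => ⟨hY, hL.2.trans hLY⟩,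
    fun ⟨hY, hKY⟩ => ⟨hY, (Std.Symm.symm _ _ hL.2).trans hKY⟩⟩

theorem inter_preimage_component (hs : s ⊆ φ) :
    s ∩ Component φ ⁻¹' {Component φ X} = s ∩ Component φ X := by
  ext K
  refine ⟨fun ⟨hK, hKX⟩ => ⟨hK, ?_⟩, fun ⟨hK, hKX⟩ => ⟨hK, component_eq_of_mem hKX⟩⟩
  exact (hKX : Component φ K = Component φ X) ▸ self_mem_component (hs hK)

theorem inter_component_ne_of_mem_symmDiff (hX : X ∈ ψ ∆ M) (hXφ : X ∈ φ) :
    ψ ∩ Component φ X ≠ M ∩ Component φ X := by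
  intro heq
  have hmem : X ∈ ψ ↔ X ∈ M := by
    simpa [self_mem_component hXφ] using Set.ext_iff.1 heq X
  rcases hX with ⟨hXψ, hXM⟩ | ⟨hXM, hXψ⟩
  exacts [hXM (hmem.1 hXψ), hXψ (hmem.2 hXM)]

theorem eq_of_forall_inter_component_eq (hψ : ψ ⊆ φ) (hM : M ⊆ φ)
    (h : ∀ X ∈ φ, ψ ∩ Component φ X = M ∩ Component φ X) : ψ = M := by
  by_contra hne
  obtain ⟨X, hX⟩ := Set.symmDiff_nonempty.2 hne
  have hXφ : X ∈ φ := hX.elim (fun hX => hψ hX.1) fun hX => hM hX.1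
  exact inter_component_ne_of_mem_symmDiff hX hXφ (h X hXφ)

theorem finsum_diff_lt_finsum_diff_of_forall_component {β : Type*} [AddCommMonoid β]
    [PartialOrder β] [IsOrderedCancelAddMonoid β] {h : Set E → β}
    (hψ : ψ ⊆ φ) (hM : M ⊆ φ) (hfin : ∀ X ∈ φ, (Component φ X).Finite)
    (hMψ : (M ∆ ψ).Finite) (hne : ψ ≠ M)
    (hle : ∀ X ∈ φ, ∑ᶠ K ∈ ψ ∩ Component φ X, h K ≤ ∑ᶠ K ∈ M ∩ Component φ X, h K)
    (hlt : ∀ X ∈ φ, ψ ∩ Component φ X ≠ M ∩ Component φ X →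
      ∑ᶠ K ∈ ψ ∩ Component φ X, h K < ∑ᶠ K ∈ M ∩ Component φ X, h K) :
    ∑ᶠ K ∈ ψ \ M, h K < ∑ᶠ K ∈ M \ ψ, h K := by
  have hψM : (ψ ∆ M).Finite := symmDiff_comm M ψ ▸ hMψ
  have hsymm : ψ ∆ M ⊆ φ :=
    Set.union_subset (Set.sdiff_subset.trans hψ) (Set.sdiff_subset.trans hM)
  have hfiber (u v : Set (Set E)) (hu : u ⊆ φ) (X : Set E) :
      (u \ v) ∩ Component φ ⁻¹' {Component φ X} = (u ∩ Component φ X) \ (v ∩ Component φ X) := by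
    rw [inter_preimage_component (Set.sdiff_subset.trans hu), Set.inter_sdiff_distrib_right]
  have hfinC (u : Set (Set E)) (X : Set E) (hX : X ∈ φ) : (u ∩ Component φ X).Finite :=
    (hfin X hX).subset Set.inter_subset_right
  refine finsum_mem_lt_finsum_mem_of_fiberwise (hψM.subset Set.subset_union_left)
    (hψM.subset Set.subset_union_right) (Component φ) (fun X hX => ?_) ?_
  · rw [hfiber ψ M hψ, hfiber M ψ hM,
      finsum_mem_diff_le_finsum_mem_diff_iff (hfinC ψ X (hsymm hX)) (hfinC M X (hsymm hX))]
    exact hle X (hsymm hX)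
  · obtain ⟨X, hX⟩ := Set.symmDiff_nonempty.2 hne
    refine ⟨X, hX, ?_⟩
    rw [hfiber ψ M hψ, hfiber M ψ hM,
      finsum_mem_diff_lt_finsum_mem_diff_iff (hfinC ψ X (hsymm hX)) (hfinC M X (hsymm hX))]
    exact hlt X (hsymm hX) (inter_component_ne_of_mem_symmDiff hX (hsymm hX))

end Component

section HardCore

variable {E : Type*} [TopologicalSpace E] {φ ψ s t : Set (Set E)} {X : Set E}

theorem HardCore.mono (h : HardCore ψ) (hs : s ⊆ ψ) : HardCore s :=
  fun K hK L hL hne => h K (hs hK) L (hs hL) hne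

theorem HardCore.union (hs : HardCore s) (ht : HardCore t)
    (hst : ∀ K ∈ s, ∀ L ∈ t, Disjoint K L) : HardCore (s ∪ t) := by
  have hint : ∀ K ∈ s, ∀ L ∈ t, interior K ∩ interior L = ∅ := fun K hK L hL =>
    Set.disjoint_iff_inter_eq_empty.1 ((hst K hK L hL).mono interior_subset interior_subset)
  rintro K (hK | hK) L (hL | hL) hne
  · exact hs K hK L hL hne
  · exact hint K hK L hL
  · rw [Set.inter_comm]
    exact hint L hL K hK
  · exact ht K hK L hL hne

theorem hardCore_of_forall_component (hψ : ψ ⊆ φ)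
    (h : ∀ K ∈ ψ, HardCore (ψ ∩ Component φ K)) : HardCore ψ := by
  intro K hK L hL hne
  by_contra hmeet
  have hKL : (K ∩ L).Nonempty := (Set.nonempty_iff_ne_empty.2 hmeet).mono
    (Set.inter_subset_inter interior_subset interior_subset)
  have hKK := self_mem_component (hψ hK)
  exact hmeet (h K hK K ⟨hK, hKK⟩ L ⟨hL, mem_component_of_inter_nonempty hKK (hψ hL) hKL⟩ hne)

theorem LocallyHMax.finsum_lt_of_subset_component {h : Set E → ℝ} (hψ : LocallyHMax h φ ψ)
    (hC : (Component φ X).Finite) (hs : s ⊆ Component φ X) (hshc : HardCore s)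
    (hne : s ≠ ψ ∩ Component φ X) :
    ∑ᶠ K ∈ s, h K < ∑ᶠ K ∈ ψ ∩ Component φ X, h K := by
  set C := Component φ X
  have hdisj : ∀ K ∈ ψ \ C, ∀ L ∈ s, Disjoint K L := fun K hK L hL => by
    by_contra hKL
    rw [Set.not_disjoint_iff_nonempty_inter, Set.inter_comm] at hKL
    exact hK.2 (mem_component_of_inter_nonempty (hs hL) (hψ.1 hK.1) hKL)
  have hnew : (ψ \ C ∪ s) \ ψ = s \ (ψ ∩ C) := by
    ext K; have := @hs K; simp only [Set.mem_sdiff, Set.mem_union, Set.mem_inter_iff]; tauto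
  have hold : ψ \ (ψ \ C ∪ s) = (ψ ∩ C) \ s := by
    ext K; have := @hs K; simp only [Set.mem_sdiff, Set.mem_union, Set.mem_inter_iff]; tauto
  have hsymm : ψ ∆ (ψ \ C ∪ s) ⊆ C := by
    rw [Set.symmDiff_def, hold, hnew]
    exact Set.union_subset (Set.sdiff_subset.trans Set.inter_subset_right)
      (Set.sdiff_subset.trans hs)
  have hrestrict : (ψ \ C ∪ s) ∩ C = s := by
    ext K; have := @hs K; simp only [Set.mem_sdiff, Set.mem_union, Set.mem_inter_iff]; tauto
  have hne' : ψ \ C ∪ s ≠ ψ := fun heq => hne (by rw [← hrestrict, heq])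
  have key := hψ.2.2 (ψ \ C ∪ s) (Set.union_subset (Set.sdiff_subset.trans hψ.1)
    (hs.trans component_subset)) ((hψ.2.1.mono Set.sdiff_subset).union hshc hdisj)
    (hC.subset hsymm) hne'
  rwa [hnew, hold, finsum_mem_diff_lt_finsum_mem_diff_iff (hC.subset hs)
    (hC.subset Set.inter_subset_right)] at key

end HardCore

theorem subcritical_uniqueness_general {d : ℕ}
    (φ M : Set (Set (EuclideanSpace ℝ (Fin d))))
    (h : Set (EuclideanSpace ℝ (Fin d)) → ℝ)
    (hfin : ∀ K ∈ φ, (Component φ K).Finite)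
    (hdist : ∀ K ∈ φ, ∀ s t : Set (Set (EuclideanSpace ℝ (Fin d))),
      s ⊆ Component φ K → t ⊆ Component φ K → HardCore s → HardCore t → s ≠ t →
      ∑ᶠ L ∈ s, h L ≠ ∑ᶠ L ∈ t, h L)
    (hMsub : M ⊆ φ)
    (hMhc : ∀ K ∈ φ, HardCore (M ∩ Component φ K))
    (hMmax : ∀ K ∈ φ, ∀ s : Set (Set (EuclideanSpace ℝ (Fin d))),
      s ⊆ Component φ K → HardCore s →
      ∑ᶠ L ∈ s, h L ≤ ∑ᶠ L ∈ (M ∩ Component φ K), h L) :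
    LocallyHMax h φ M ∧
      ∀ ψ : Set (Set (EuclideanSpace ℝ (Fin d))), LocallyHMax h φ ψ → ψ = M := by
  have hMmax_inter : ∀ ψ, HardCore ψ → ∀ X ∈ φ,
      ∑ᶠ L ∈ ψ ∩ Component φ X, h L ≤ ∑ᶠ L ∈ M ∩ Component φ X, h L := fun ψ hψ X hX =>
    hMmax X hX _ Set.inter_subset_right (hψ.mono Set.inter_subset_left)
  refine ⟨⟨hMsub, hardCore_of_forall_component hMsub fun K hK => hMhc K (hMsub hK), ?_⟩, ?_⟩
  · intro ψ hψ hψhc hMψ hne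
    refine finsum_diff_lt_finsum_diff_of_forall_component hψ hMsub hfin hMψ hne
      (hMmax_inter ψ hψhc) fun X hX hneX => (hMmax_inter ψ hψhc X hX).lt_of_ne ?_
    exact hdist X hX _ _ Set.inter_subset_right Set.inter_subset_right
      (hψhc.mono Set.inter_subset_left) (hMhc X hX) hneX
  · intro ψ hψ
    refine eq_of_forall_inter_component_eq hψ.1 hMsub fun X hX => ?_
    by_contra hne
    exact (hMmax_inter ψ hψ.2.1 X hX).not_gt <| hψ.finsum_lt_of_subset_component (hfin X hX)
      Set.inter_subset_right (hMhc X hX) (Ne.symm hne)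

/-- suppose each connected component of the locally finite collection `φ`
of compact sets is finite and distinct hard-core subsets of a component have distinct
`h`-sums. If `M` (= `φ_max`) restricts on every component to the unique hard-core subset
maximizing the sum of `h`-values, then `M` is a locally `h`-maximal hard-core thinning
of `φ` and, conversely, every locally `h`-maximal hard-core thinning of `φ` equals `M`. -/
theorem subcritical_uniqueness {d : ℕ}
    (φ M : Set (Set (EuclideanSpace ℝ (Fin d))))
    (h : Set (EuclideanSpace ℝ (Fin d)) → ℝ) (hh : ∀ K, 0 ≤ h K)
    (hφ : LocFinite φ) (hcpt : ∀ K ∈ φ, IsCompact K)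
    (hfin : ∀ K ∈ φ, (Component φ K).Finite)
    (hdist : ∀ K ∈ φ, ∀ s t : Set (Set (EuclideanSpace ℝ (Fin d))),
      s ⊆ Component φ K → t ⊆ Component φ K → HardCore s → HardCore t → s ≠ t →
      ∑ᶠ L ∈ s, h L ≠ ∑ᶠ L ∈ t, h L)
    (hMsub : M ⊆ φ)
    (hMhc : ∀ K ∈ φ, HardCore (M ∩ Component φ K))
    (hMmax : ∀ K ∈ φ, ∀ s : Set (Set (EuclideanSpace ℝ (Fin d))),
      s ⊆ Component φ K → HardCore s →
      ∑ᶠ L ∈ s, h L ≤ ∑ᶠ L ∈ (M ∩ Component φ K), h L) :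
    LocallyHMax h φ M ∧
      ∀ ψ : Set (Set (EuclideanSpace ℝ (Fin d))), LocallyHMax h φ ψ → ψ = M :=
  subcritical_uniqueness_general φ M h hfin hdist hMsub hMhc hMmax
end

section
/- There exists δ₁ = δ₁(d,m) ∈ (0,1) such that for every δ ∈ (0,δ₁) the following holds. Let V be a finite family of closed balls in ℝ^d with radii in [1,m]. Suppose K₁ = B(y₁,ρ₁) and K₂ = B(y₂,ρ₂) with ρ₁,ρ₂ ∈ [1,m] intersect no ball of V, y₁ ∉ K₂, and K₁ ∩ K₂ ≠ ∅. Choose y₂' on the segment [y₁,y₂] with |y₂ − y₂'| = δ. Then for every ρ' ∈ (δ² + ρ₂ − δ, 2δ² + ρ₂ − δ) and every y' ∈ B(y₂', δ²), the ball B(y',ρ') intersects B(y₁,ρ₁) and intersects no ball of V. -/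
/-! Write `y₂' = y₂ + a (y₁ - y₂)`, so that `a |y₁ - y₂| = δ`. For a ball `B(z, r)` of `V`,
Stewart's identity `|z - y₂'|² = (1 - a)|z - y₂|² + a|z - y₁|² - a(1 - a)|y₁ - y₂|²`, together with
`|z - y₂| > r + ρ₂`, `|z - y₁| > r + ρ₁` and `ρ₂ < |y₁ - y₂| ≤ ρ₁ + ρ₂`, gives
`|z - y₂'|² ≥ (r + ρ₂ - δ)² + 2arρ₁`: moving the centre by `δ` brings it at most `δ` closer to `z`,
with a gain `2arρ₁ ≥ δ/m` in the square. Once `δ < 1/(25m²)` this gain absorbs the `3δ²` by which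
`B(y', ρ')` may stick out of `B(y₂', ρ₂ - δ)`. That `B(y', ρ')` still meets `K₁` is the triangle
inequality `|y₁ - y'| ≤ |y₁ - y₂| - δ + δ² < ρ₁ + ρ'`. -/

open Metric Set AffineMap

theorem add_three_mul_sq_lt_of_sub_sq_add_le {m δ R g X : ℝ} (hm : 1 ≤ m) (hδ : 0 < δ)
    (hδm : 25 * m ^ 2 * δ < 1) (hR : R ≤ 2 * m) (hg : δ ≤ m * g)
    (hX : (R - δ) ^ 2 + g ≤ X ^ 2) (hX₀ : 0 ≤ X) : R - δ + 3 * δ ^ 2 < X := by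
  refine lt_of_pow_lt_pow_left₀ 2 hX₀ (lt_of_lt_of_le ?_ hX)
  have hδ₁ : δ < 1 := by nlinarith
  have hloss : m * (6 * δ ^ 2 * (R - δ) + 9 * δ ^ 4) < m * g := by
    have hmδ : 0 ≤ m * δ ^ 2 := mul_nonneg (by linarith) (sq_nonneg δ)
    have h₁ : m * (6 * δ ^ 2 * (R - δ)) ≤ 12 * m ^ 2 * δ ^ 2 := by
      nlinarith [mul_nonneg hmδ (by linarith : 0 ≤ 2 * m - R + δ)]
    have h₂ : m * (9 * δ ^ 4) ≤ 9 * m ^ 2 * δ ^ 2 := by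
      nlinarith [mul_nonneg hmδ (by nlinarith : 0 ≤ m - δ ^ 2)]
    nlinarith
  nlinarith [lt_of_mul_lt_mul_left hloss (by linarith : (0 : ℝ) ≤ m)]

section
variable {E : Type*} [NormedAddCommGroup E] [InnerProductSpace ℝ E]

theorem dist_sq_lineMap (z x y : E) (t : ℝ) :
    dist z (lineMap x y t) ^ 2 =
      (1 - t) * dist z x ^ 2 + t * dist z y ^ 2 - t * (1 - t) * dist x y ^ 2 := by
  have hz : z - lineMap x y t = (1 - t) • (z - x) + t • (z - y) := by
    rw [lineMap_apply_module]; module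
  have hxy : x - y = (z - y) - (z - x) := by abel
  simp only [dist_eq_norm, hz, hxy, norm_add_sq_real, norm_sub_sq_real, norm_smul,
    inner_smul_left, inner_smul_right, conj_trivial, Real.norm_eq_abs, mul_pow, sq_abs,
    real_inner_comm (z - x)]
  ring

theorem sub_sq_add_le_dist_sq_lineMap {x₁ x₂ z : E} {a r ρ₁ ρ₂ : ℝ} (ha₀ : 0 ≤ a) (ha₁ : a ≤ 1)
    (hr : 0 ≤ r) (hρ₂ : 0 ≤ ρ₂) (hD₁ : ρ₂ ≤ dist x₂ x₁) (hD₂ : dist x₂ x₁ ≤ ρ₁ + ρ₂)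
    (h₁ : r + ρ₁ ≤ dist z x₁) (h₂ : r + ρ₂ ≤ dist z x₂) :
    (r + ρ₂ - a * dist x₂ x₁) ^ 2 + 2 * a * r * ρ₁ ≤ dist z (lineMap x₂ x₁ a) ^ 2 := by
  rw [dist_sq_lineMap]
  set D := dist x₂ x₁
  have hsq₁ : (r + ρ₁) ^ 2 ≤ dist z x₁ ^ 2 := pow_le_pow_left₀ (by linarith) h₁ 2
  have hsq₂ : (r + ρ₂) ^ 2 ≤ dist z x₂ ^ 2 := pow_le_pow_left₀ (by linarith) h₂ 2
  -- with `e = D - ρ₂ ∈ [0, ρ₁]` the right-hand side is `2rρ₁ + 2re + ρ₁² - e²`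
  have hgain : 2 * r * ρ₁ ≤ (r + ρ₁) ^ 2 - (r + ρ₂) ^ 2 - D ^ 2 + 2 * (r + ρ₂) * D := by
    nlinarith [mul_nonneg hr (sub_nonneg.2 hD₁),
      mul_nonneg (sub_nonneg.2 hD₂) (by linarith : 0 ≤ ρ₁ + D - ρ₂)]
  nlinarith [mul_le_mul_of_nonneg_left hsq₁ ha₀, mul_le_mul_of_nonneg_left hsq₂ (sub_nonneg.2 ha₁),
    mul_le_mul_of_nonneg_left hgain ha₀]

theorem disjoint_closedBall_lineMap {x₁ x₂ z : E} {a m r ρ₁ ρ₂ δ : ℝ}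
    (hr : 1 ≤ r) (hrm : r ≤ m) (hρ₁ : 1 ≤ ρ₁) (hρ₁m : ρ₁ ≤ m) (hρ₂ : 0 ≤ ρ₂) (hρ₂m : ρ₂ ≤ m)
    (hD₁ : ρ₂ ≤ dist x₂ x₁) (hD₂ : dist x₂ x₁ ≤ ρ₁ + ρ₂) (ha₀ : 0 ≤ a) (ha₁ : a ≤ 1)
    (haD : a * dist x₂ x₁ = δ) (hδ : 0 < δ) (hδm : 25 * m ^ 2 * δ < 1)
    (h₁ : Disjoint (closedBall x₁ ρ₁) (closedBall z r))
    (h₂ : Disjoint (closedBall x₂ ρ₂) (closedBall z r)) :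
    Disjoint (closedBall (lineMap x₂ x₁ a) (ρ₂ - δ + 3 * δ ^ 2)) (closedBall z r) := by
  rw [disjoint_closedBall_closedBall_iff (by linarith) (by linarith)] at h₁ h₂
  have hgain := sub_sq_add_le_dist_sq_lineMap (z := z) (r := r) ha₀ ha₁ (by linarith) hρ₂ hD₁ hD₂
    (by rw [dist_comm]; linarith) (by rw [dist_comm]; linarith)
  rw [haD] at hgain
  have hδ_le : δ ≤ m * (2 * a * r * ρ₁) := by
    rw [← haD]
    nlinarith [mul_le_mul_of_nonneg_left hD₂ ha₀, mul_nonneg ha₀ (by linarith : 0 ≤ m - 1),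
      mul_nonneg (mul_nonneg ha₀ (by linarith : (0 : ℝ) ≤ m)) (by nlinarith : 0 ≤ r * ρ₁ - 1)]
  refine closedBall_disjoint_closedBall ?_
  rw [dist_comm]
  linarith [add_three_mul_sq_lt_of_sub_sq_add_le (by linarith) hδ hδm (by linarith) hδ_le hgain
    dist_nonneg]

end

/-- perturbation lemma: there exists `δ₁ = δ₁(d,m) ∈ (0,1)` such that for
every `δ ∈ (0,δ₁)`, any ball obtained by perturbing `K₂ = B(y₂,ρ₂)` as described (center
moved by `δ` towards `y₁` up to an error `δ²`, radius in `(δ² + ρ₂ − δ, 2δ² + ρ₂ − δ)`)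
still intersects `K₁ = B(y₁,ρ₁)` and intersects no ball of the family `V`. -/
theorem perturbation_lemma (d : ℕ) (m : ℝ) (hm : (1.1 : ℝ) ≤ m) :
    ∃ δ₁ : ℝ, δ₁ ∈ Set.Ioo (0 : ℝ) 1 ∧
      ∀ δ ∈ Set.Ioo (0 : ℝ) δ₁,
      ∀ V : Finset (EuclideanSpace ℝ (Fin d) × ℝ),
        (∀ p ∈ V, p.2 ∈ Set.Icc (1 : ℝ) m) →
      ∀ y₁ y₂ : EuclideanSpace ℝ (Fin d), ∀ ρ₁ ρ₂ : ℝ,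
        ρ₁ ∈ Set.Icc (1 : ℝ) m → ρ₂ ∈ Set.Icc (1 : ℝ) m →
        (∀ p ∈ V, closedBall y₁ ρ₁ ∩ closedBall p.1 p.2 = ∅) →
        (∀ p ∈ V, closedBall y₂ ρ₂ ∩ closedBall p.1 p.2 = ∅) →
        y₁ ∉ closedBall y₂ ρ₂ →
        (closedBall y₁ ρ₁ ∩ closedBall y₂ ρ₂).Nonempty →
      ∀ y₂' ∈ segment ℝ y₁ y₂, dist y₂ y₂' = δ →
      ∀ ρ' ∈ Set.Ioo (δ ^ 2 + ρ₂ - δ) (2 * δ ^ 2 + ρ₂ - δ),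
      ∀ y' ∈ closedBall y₂' (δ ^ 2),
        (closedBall y₁ ρ₁ ∩ closedBall y' ρ').Nonempty ∧
        ∀ p ∈ V, closedBall y' ρ' ∩ closedBall p.1 p.2 = ∅ := by
  refine ⟨(25 * m ^ 2)⁻¹, ⟨by positivity, inv_lt_one_of_one_lt₀ (by nlinarith)⟩, ?_⟩
  rintro δ ⟨hδ, hδ₁⟩ V hV y₁ y₂ ρ₁ ρ₂ ⟨hρ₁, hρ₁m⟩ ⟨hρ₂, hρ₂m⟩ hV₁ hV₂ hy₁ hK y₂' hy₂' hδy₂'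
    ρ' ⟨hρ'₁, hρ'₂⟩ y' hy'
  have hδm : 25 * m ^ 2 * δ < 1 := by
    rwa [← lt_inv_mul_iff₀ (by positivity), mul_one]
  have hδ1 : δ < 1 := by nlinarith
  rw [segment_symm, segment_eq_image_lineMap] at hy₂'
  obtain ⟨a, ⟨ha₀, ha₁⟩, rfl⟩ := hy₂'
  set y₂' := lineMap y₂ y₁ a
  have hD₁ : ρ₂ < dist y₂ y₁ := by simpa [dist_comm] using hy₁
  have hD₂ : dist y₂ y₁ ≤ ρ₁ + ρ₂ := by
    simpa [dist_comm, add_comm] using dist_le_add_of_nonempty_closedBall_inter_closedBall hK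
  have haD : a * dist y₂ y₁ = δ := by
    rwa [dist_left_lineMap, Real.norm_of_nonneg ha₀] at hδy₂'
  have hy'y₂' : dist y₂' y' ≤ δ ^ 2 := mem_closedBall'.1 hy'
  constructor
  · refine not_disjoint_iff_nonempty_inter.1 fun h ↦ ?_
    have hfar := (disjoint_closedBall_closedBall_iff (by linarith) (by nlinarith)).1 h
    have hy₁y₂' : dist y₂' y₁ = (1 - a) * dist y₂ y₁ := by
      rw [dist_lineMap_right, Real.norm_of_nonneg (by linarith)]
    linarith [dist_triangle_left y₁ y' y₂']
  · intro p hp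
    obtain ⟨hr, hrm⟩ := hV p hp
    simp only [← disjoint_iff_inter_eq_empty] at hV₁ hV₂ ⊢
    refine (disjoint_closedBall_lineMap hr hrm hρ₁ hρ₁m (by linarith) hρ₂m hD₁.le hD₂ ha₀ ha₁
      haD hδ hδm (hV₁ p hp) (hV₂ p hp)).mono_left (closedBall_subset_closedBall' ?_)
    rw [dist_comm]
    linarith
end

section
/- There exists r₁ = r₁(d,m) with the following property. Let V be a finite family of closed balls in ℝ^d with radii in [1,m]. Suppose y ∈ ℝ^d and ρ ∈ [1,m] satisfy r = |y| ≥ r₁, no ball of V has its center in B(0, r − ρ + 0.01), and B(y,ρ) intersects no ball of V. Let y' be the point on the segment [0,y] with |y' − y| = ρ + 1. Then the distance from y' to every ball in V is at least 1 + 0.001/m. -/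
open Metric Set
open scoped RealInnerProductSpace

/-!
Write `y' = s • u` and `y = (s + ρ + 1) • u` with `u` a unit vector, and let `w = z - y'` for a
center `z`. Since `‖z‖ ≥ s + 1.01` and `s` is huge, the sphere of radius `s + 1.01` is almost the
hyperplane `⟪w, u⟫ = 1.01`, so either `w` is already long or `⟪w, u⟫ ≥ 1.005`. In the latter case
expanding `‖w - (ρ + 1) • u‖ ≥ ρ + τ` gives `‖w‖² ≥ τ² + 2ρτ + 1 + 0.01 (ρ + 1)`, and the slack
`0.01 (ρ + 1) ≥ 0.02` absorbs the extra `0.001 / m`.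
-/

theorem eq_smul_of_mem_segment_zero {E : Type*} [NormedAddCommGroup E] [NormedSpace ℝ E]
    {y y' : E} (h : y' ∈ segment ℝ 0 y) :
    y' = ((‖y‖ - dist y' y) / ‖y‖) • y := by
  obtain ⟨β, ⟨hβ0, hβ1⟩, rfl⟩ : ∃ β ∈ Icc (0 : ℝ) 1, β • y = y' := by
    simpa [segment_eq_image'] using h
  rcases eq_or_ne y 0 with rfl | hy
  · simp
  have hdist : dist (β • y) y = (1 - β) * ‖y‖ := by
    rw [dist_eq_norm, show β • y - y = -((1 - β) • y) by module, norm_neg,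
      norm_smul, Real.norm_of_nonneg (by linarith)]
  rw [hdist]
  congr 1
  field_simp
  ring

theorem le_norm_sub_smul_of_far {E : Type*} [NormedAddCommGroup E] [InnerProductSpace ℝ E]
    {u z : E} (hu : ‖u‖ = 1) {m s ρ τ : ℝ} (hm : 1 ≤ m)
    (hρ : 1 ≤ ρ) (hτ : τ ∈ Icc 0 m) (hs : 100 * (m + 2) ^ 2 ≤ s)
    (hz : s + 1.01 ≤ ‖z‖) (hzy : ρ + τ ≤ ‖z - (s + ρ + 1) • u‖) :
    τ + 1 + 0.001 / m ≤ ‖z - s • u‖ := by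
  obtain ⟨hτ0, hτm⟩ := hτ
  have hs0 : 0 ≤ s := le_trans (by positivity) hs
  set w := z - s • u
  have hε : 0.001 / m ≤ 0.001 := div_le_self (by norm_num) hm
  have hε0 : 0 ≤ 0.001 / m := by positivity
  have hεm : 0.001 / m * m = 0.001 := div_mul_cancel₀ _ (by positivity)
  refine le_of_sq_le_sq ?_ (norm_nonneg w)
  rcases le_or_gt ((m + 2) ^ 2) (‖w‖ ^ 2) with hw | hw
  · nlinarith
  have hz2 : ‖z‖ ^ 2 = ‖w‖ ^ 2 + 2 * s * ⟪w, u⟫ + s ^ 2 := by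
    rw [show z = w + s • u by simp [w], norm_add_sq_real, inner_smul_right, norm_smul, hu,
      Real.norm_of_nonneg (by positivity)]
    ring
  have hzy2 : ‖z - (s + ρ + 1) • u‖ ^ 2 = ‖w‖ ^ 2 - 2 * (ρ + 1) * ⟪w, u⟫ + (ρ + 1) ^ 2 := by
    rw [show z - (s + ρ + 1) • u = w - (ρ + 1) • u by simp only [w]; module, norm_sub_sq_real,
      inner_smul_right, norm_smul, hu, Real.norm_of_nonneg (by positivity)]
    ring
  have hinner : 1.005 ≤ ⟪w, u⟫ := by
    have hz_sq : (s + 1.01) ^ 2 ≤ ‖z‖ ^ 2 := pow_le_pow_left₀ (by positivity) hz 2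
    nlinarith
  have hsep : (ρ + τ) ^ 2 ≤ ‖z - (s + ρ + 1) • u‖ ^ 2 := pow_le_pow_left₀ (by positivity) hzy 2
  nlinarith [mul_nonneg hτ0 (sub_nonneg.2 hρ), mul_le_mul hτm hε hε0 (by positivity)]

/-- there exists `r₁ = r₁(d,m)` such that if `|y| = r ≥ r₁`, no ball of the
family `V` (radii in `[1,m]`) has its center in `B(0, r − ρ + 0.01)`, and `B(y,ρ)`
intersects no ball of `V`, then the point `y'` on the segment `[0,y]` with
`|y' − y| = ρ + 1` has distance at least `1 + 0.001/m` from every ball of `V`. -/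
theorem retraction_point_far (d : ℕ) (m : ℝ) (hm : (1.1 : ℝ) ≤ m) :
    ∃ r₁ : ℝ, ∀ V : Finset (EuclideanSpace ℝ (Fin d) × ℝ),
      (∀ p ∈ V, p.2 ∈ Set.Icc (1 : ℝ) m) →
      ∀ y : EuclideanSpace ℝ (Fin d), ∀ ρ : ℝ, ρ ∈ Set.Icc (1 : ℝ) m →
        r₁ ≤ ‖y‖ →
        (∀ p ∈ V, p.1 ∉ closedBall (0 : EuclideanSpace ℝ (Fin d)) (‖y‖ - ρ + 0.01)) →
        (∀ p ∈ V, closedBall y ρ ∩ closedBall p.1 p.2 = ∅) →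
      ∀ y' ∈ segment ℝ (0 : EuclideanSpace ℝ (Fin d)) y, dist y' y = ρ + 1 →
        ∀ p ∈ V, 1 + 0.001 / m ≤ dist y' p.1 - p.2 := by
  refine ⟨100 * (m + 2) ^ 2 + m + 1, ?_⟩
  intro V hV y ρ ⟨hρ1, hρm⟩ hr hcenter hdisj y' hy' hdy' p hp
  obtain ⟨hτ1, hτm⟩ := hV p hp
  have hy : ‖y‖ ≠ 0 := by nlinarith
  set u := ‖y‖⁻¹ • y
  have hu : ‖u‖ = 1 := norm_smul_inv_norm (norm_ne_zero_iff.1 hy)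
  have hyu : y = (‖y‖ - ρ - 1 + ρ + 1) • u := by
    rw [show ‖y‖ - ρ - 1 + ρ + 1 = ‖y‖ by ring, smul_inv_smul₀ hy]
  have hy'u : y' = (‖y‖ - ρ - 1) • u := by
    rw [eq_smul_of_mem_segment_zero hy', hdy', smul_smul]
    ring_nf
  have hfar : ‖y‖ - ρ + 0.01 < ‖p.1‖ := by simpa using hcenter p hp
  have hsep : ρ + p.2 < dist y p.1 :=
    (disjoint_closedBall_closedBall_iff (by linarith) (by linarith)).1
      (Set.disjoint_iff_inter_eq_empty.2 (hdisj p hp))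
  rw [hyu, dist_comm, dist_eq_norm] at hsep
  have hkey := le_norm_sub_smul_of_far hu (by linarith) hρ1 ⟨by linarith, hτm⟩ (by linarith)
    (by linarith) hsep.le
  rw [dist_comm, dist_eq_norm, hy'u]
  linarith
end

section
/- Let φ be a locally finite collection of compact sets with an h-function, and let K₀ ∈ φ be huge in φ (i.e. h(K₀) > ∑_{K ∈ φ : K ∩ K₀ ≠ ∅, h(K) < h(K₀)} h(K)) and satisfy h(K₀) > h(K) for every K ∈ φ \ {K₀} with K ∩ K₀ ≠ ∅. Then K₀ belongs to every locally h-maximal hard-core thinning ψ of φ. -/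
open scoped BigOperators symmDiff

/-- a huge grain `K₀` (its `h`-value exceeds the total `h`-value of all
smaller intersecting grains) that is moreover larger than every grain of `φ`
intersecting it belongs to every locally `h`-maximal hard-core thinning of `φ`. -/
theorem huge_grain_in_every_thinning {d : ℕ}
    (φ ψ : Set (Set (EuclideanSpace ℝ (Fin d))))
    (h : Set (EuclideanSpace ℝ (Fin d)) → ℝ) (hh : ∀ K, 0 ≤ h K)
    (hφ : LocFinite φ) (hcpt : ∀ K ∈ φ, IsCompact K)
    (K₀ : Set (EuclideanSpace ℝ (Fin d))) (hK₀ : K₀ ∈ φ)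
    (hhuge : ∑ᶠ K ∈ {K ∈ φ | (K ∩ K₀).Nonempty ∧ h K < h K₀}, h K < h K₀)
    (hlarger : ∀ K ∈ φ, K ≠ K₀ → (K ∩ K₀).Nonempty → h K < h K₀)
    (hψ : LocallyHMax h φ ψ) :
    K₀ ∈ ψ := by
  by_contra hK₀ψ
  obtain ⟨hsub, hhc, hmax⟩ := hψ
  set S : Set (Set (EuclideanSpace ℝ (Fin d))) := {K ∈ ψ | (K ∩ K₀).Nonempty} with hS
  set T : Set (Set (EuclideanSpace ℝ (Fin d))) :=
    {K ∈ φ | (K ∩ K₀).Nonempty ∧ h K < h K₀} with hT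
  -- finiteness
  obtain ⟨R, hR⟩ := ((hcpt K₀ hK₀).isBounded).subset_closedBall (0 : EuclideanSpace ℝ (Fin d))
  have hTfin : T.Finite := by
    refine (hφ R).subset ?_
    rintro K ⟨hKφ, ⟨x, hxK, hxK₀⟩, -⟩
    exact ⟨hKφ, x, hxK, hR hxK₀⟩
  have hSsubT : S ⊆ T := by
    rintro K ⟨hKψ, hKint⟩
    have hKne : K ≠ K₀ := fun e => hK₀ψ (e ▸ hKψ)
    exact ⟨hsub hKψ, hKint, hlarger K (hsub hKψ) hKne hKint⟩
  have hSfin : S.Finite := hTfin.subset hSsubT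
  -- the swap
  set ψ' : Set (Set (EuclideanSpace ℝ (Fin d))) := (ψ \ S) ∪ {K₀} with hψ'
  have hψ'sub : ψ' ⊆ φ := by
    rintro K (⟨hKψ, -⟩ | hK)
    · exact hsub hKψ
    · simp only [Set.mem_singleton_iff] at hK; exact hK ▸ hK₀
  have hK₀ψ' : K₀ ∈ ψ' := Or.inr rfl
  have hψ'hc : HardCore ψ' := by
    rintro K hK L hL hKL
    have key : ∀ M, M ∈ ψ \ S → interior M ∩ interior K₀ = ∅ := by
      rintro M ⟨hMψ, hMS⟩
      have : ¬(M ∩ K₀).Nonempty := fun hn => hMS ⟨hMψ, hn⟩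
      rw [Set.not_nonempty_iff_eq_empty] at this
      exact Set.eq_empty_of_subset_empty
        (this ▸ Set.inter_subset_inter interior_subset interior_subset)
    rcases hK with hK | hK <;> rcases hL with hL | hL
    · exact hhc K hK.1 L hL.1 hKL
    · simp only [Set.mem_singleton_iff] at hL; rw [hL]; exact key K hK
    · simp only [Set.mem_singleton_iff] at hK
      rw [hK, Set.inter_comm]; exact key L hL
    · simp only [Set.mem_singleton_iff] at hK hL; exact absurd (hK.trans hL.symm) hKL
  have hdiff1 : ψ' \ ψ = {K₀} := by
    ext K
    constructor
    · rintro ⟨hK | hK, hKψ⟩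
      · exact absurd hK.1 hKψ
      · exact hK
    · rintro rfl; exact ⟨Or.inr rfl, hK₀ψ⟩
  have hdiff2 : ψ \ ψ' = S := by
    ext K
    constructor
    · rintro ⟨hKψ, hKψ'⟩
      by_contra hKS
      exact hKψ' (Or.inl ⟨hKψ, hKS⟩)
    · rintro hKS
      refine ⟨hKS.1, ?_⟩
      rintro (hK | hK)
      · exact hK.2 hKS
      · simp only [Set.mem_singleton_iff] at hK; exact hK₀ψ (hK ▸ hKS.1)
  have hsymm : (ψ ∆ ψ').Finite := by
    have : ψ ∆ ψ' ⊆ S ∪ {K₀} := by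
      rw [Set.symmDiff_def]
      rintro K (hK | hK)
      · rw [hdiff2] at hK; exact Or.inl hK
      · rw [hdiff1] at hK; exact Or.inr hK
    exact ((hSfin.union (Set.finite_singleton K₀)).subset this)
  have hne : ψ' ≠ ψ := fun e => hK₀ψ (e ▸ hK₀ψ')
  have hineq := hmax ψ' hψ'sub hψ'hc hsymm hne
  rw [hdiff1, hdiff2, finsum_mem_singleton] at hineq
  -- compare sums
  have hsums : ∑ᶠ K ∈ S, h K ≤ ∑ᶠ K ∈ T, h K := by
    rw [finsum_mem_eq_finite_toFinset_sum _ hSfin, finsum_mem_eq_finite_toFinset_sum _ hTfin]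
    exact Finset.sum_le_sum_of_subset_of_nonneg
      (Set.Finite.toFinset_subset_toFinset.mpr hSsubT) (fun K _ _ => hh K)
  exact absurd (hineq.trans_le (hsums.trans hhuge.le)) (lt_irrefl _)
end

section
/- Let a ≥ 1 be an integer and let φ be a locally finite collection of closed balls in ℝ^d with radii in [0,1]. Set h_a(B(x,r)) = exp(a·r). Let K₀ = B(x₀,r₀) ∈ φ, and consider the exponent parameter A = a^{2d}. Suppose (i) at most a balls of φ \ {K₀} intersect K₀, and (ii) every ball B(x,r) ∈ φ \ {K₀} intersecting K₀ has r ∉ (r₀ − a^{−3d/2}, r₀]. If a ≥ 2, then h_{a^{2d}}(K₀) > ∑ h_{a^{2d}}(K) over all K = B(x,r) ∈ φ with K ∩ K₀ ≠ ∅ and r < r₀; i.e., K₀ is a^{2d}-huge in φ. -/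
open scoped BigOperators
open Metric

lemma sq_lt_exp_of_pos {t : ℝ} (ht : 0 < t) : t ^ 2 < Real.exp t := by
  have h : t / 4 + 1 < Real.exp (t / 4) := Real.add_one_lt_exp (by positivity)
  have h4 : (t / 4 + 1) ^ 4 < Real.exp (t / 4) ^ 4 :=
    pow_lt_pow_left₀ h (by positivity) (by norm_num)
  have hE : Real.exp (t / 4) ^ 4 = Real.exp t := by
    rw [← Real.exp_nat_mul]; norm_num; ring_nf
  have h2 : t ^ 2 ≤ (t / 4 + 1) ^ 4 := by nlinarith [sq_nonneg (t / 4 - 1), sq_nonneg t]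
  linarith [hE ▸ h4]

def ballOf {d : ℕ} (p : EuclideanSpace ℝ (Fin d) × ℝ) : Set (EuclideanSpace ℝ (Fin d)) :=
  closedBall p.1 p.2

/-- with `h_A(B(x,r)) = exp(A·r)` and `A = a^{2d}`, if at most `a` balls of
`φ` intersect `K₀ = B(x₀,r₀)` and none of them has radius in `(r₀ − a^{−3d/2}, r₀]`,
then `K₀` is `a^{2d}`-huge in `φ` (for `a ≥ 2`, `d ≥ 1`, radii in `[0,1]`). -/
theorem huge_from_radius_gap {d a : ℕ} (hd : 1 ≤ d) (ha : 2 ≤ a)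
    (φ : Set (EuclideanSpace ℝ (Fin d) × ℝ))
    (hrad : ∀ p ∈ φ, p.2 ∈ Set.Icc (0 : ℝ) 1)
    (x₀ : EuclideanSpace ℝ (Fin d)) (r₀ : ℝ) (hK₀ : (x₀, r₀) ∈ φ)
    (hr₀ : r₀ ∈ Set.Icc (0 : ℝ) 1)
    (hfin : {p ∈ φ | p ≠ (x₀, r₀) ∧ (ballOf p ∩ ballOf (x₀, r₀)).Nonempty}.Finite)
    (hcard : {p ∈ φ | p ≠ (x₀, r₀) ∧ (ballOf p ∩ ballOf (x₀, r₀)).Nonempty}.ncard ≤ a)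
    (hgap : ∀ p ∈ φ, p ≠ (x₀, r₀) → (ballOf p ∩ ballOf (x₀, r₀)).Nonempty →
      p.2 ∉ Set.Ioc (r₀ - (a : ℝ) ^ (-(3 * (d : ℝ)) / 2)) r₀) :
    ∑ᶠ p ∈ {p ∈ φ | (ballOf p ∩ ballOf (x₀, r₀)).Nonempty ∧ p.2 < r₀},
        Real.exp ((a : ℝ) ^ (2 * d) * p.2) <
      Real.exp ((a : ℝ) ^ (2 * d) * r₀) := by
  have ha0 : (0:ℝ) < a := by positivity
  have ha1 : (1:ℝ) < a := by exact_mod_cast lt_of_lt_of_le one_lt_two (by exact_mod_cast ha)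
  set ε : ℝ := (a : ℝ) ^ (-(3 * (d : ℝ)) / 2) with hε
  set A : ℝ := (a : ℝ) ^ (2 * d) with hA
  have hεpos : 0 < ε := Real.rpow_pos_of_pos ha0 _
  have hApos : 0 < A := by positivity
  -- key : A * ε = a ^ (d/2) (rpow)
  have hkey : A * ε = (a : ℝ) ^ ((d : ℝ) / 2) := by
    rw [hA, hε, ← Real.rpow_natCast (a : ℝ) (2 * d), ← Real.rpow_add ha0]
    congr 1
    push_cast
    ring
  set t : ℝ := (a : ℝ) ^ ((d : ℝ) / 2) with htdef
  have htpos : 0 < t := Real.rpow_pos_of_pos ha0 _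
  have hat : (a : ℝ) ≤ t ^ 2 := by
    have : t ^ 2 = (a : ℝ) ^ (d : ℝ) := by
      rw [htdef, ← Real.rpow_natCast ((a:ℝ) ^ ((d:ℝ)/2)) 2, ← Real.rpow_mul ha0.le]
      norm_num
    rw [this]
    calc (a : ℝ) = (a : ℝ) ^ (1 : ℝ) := (Real.rpow_one _).symm
    _ ≤ (a : ℝ) ^ (d : ℝ) := by
        apply Real.rpow_le_rpow_left_iff ha1 |>.mpr
        exact_mod_cast hd
  have haexp : (a : ℝ) < Real.exp (A * ε) := by
    rw [hkey]
    exact lt_of_le_of_lt hat (sq_lt_exp_of_pos htpos)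
  -- the summation set
  set T := {p ∈ φ | p ≠ (x₀, r₀) ∧ (ballOf p ∩ ballOf (x₀, r₀)).Nonempty} with hT
  set S := {p ∈ φ | (ballOf p ∩ ballOf (x₀, r₀)).Nonempty ∧ p.2 < r₀} with hS
  have hsub : S ⊆ T := by
    rintro p ⟨hpφ, hint, hlt⟩
    refine ⟨hpφ, ?_, hint⟩
    intro h
    rw [h] at hlt
    exact lt_irrefl _ hlt
  have hSfin : S.Finite := hfin.subset hsub
  have hsum : ∑ᶠ p ∈ S, Real.exp (A * p.2) = ∑ p ∈ hSfin.toFinset, Real.exp (A * p.2) :=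
    finsum_mem_eq_finite_toFinset_sum _ hSfin
  rw [hsum]
  have hbound : ∀ p ∈ hSfin.toFinset, Real.exp (A * p.2) ≤ Real.exp (A * (r₀ - ε)) := by
    intro p hp
    rw [Set.Finite.mem_toFinset] at hp
    obtain ⟨hpφ, hint, hlt⟩ := hp
    have hne : p ≠ (x₀, r₀) := fun h => by rw [h] at hlt; exact lt_irrefl _ hlt
    have hgap' := hgap p hpφ hne hint
    have : p.2 ≤ r₀ - ε := by
      by_contra h
      exact hgap' ⟨lt_of_not_ge h, hlt.le⟩
    exact Real.exp_le_exp.mpr (by nlinarith)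
  have hcardS : (hSfin.toFinset.card : ℝ) ≤ a := by
    have h1 : hSfin.toFinset.card = S.ncard := (Set.ncard_eq_toFinset_card S hSfin).symm
    have h2 : S.ncard ≤ T.ncard := Set.ncard_le_ncard hsub hfin
    exact_mod_cast h1 ▸ le_trans h2 hcard
  calc ∑ p ∈ hSfin.toFinset, Real.exp (A * p.2)
      ≤ hSfin.toFinset.card • Real.exp (A * (r₀ - ε)) := Finset.sum_le_card_nsmul _ _ _ hbound
    _ = (hSfin.toFinset.card : ℝ) * Real.exp (A * (r₀ - ε)) := by rw [nsmul_eq_mul]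
    _ ≤ (a : ℝ) * Real.exp (A * (r₀ - ε)) := by
        exact mul_le_mul_of_nonneg_right hcardS (Real.exp_pos _).le
    _ < Real.exp (A * ε) * Real.exp (A * (r₀ - ε)) := by
        exact mul_lt_mul_of_pos_right haexp (Real.exp_pos _)
    _ = Real.exp (A * r₀) := by rw [← Real.exp_add]; ring_nf
end

section
/- Let ψ, ψ' be two locally h-maximal hard-core thinnings of a locally finite collection φ, and suppose C is a finite connected component of the contact graph 𝒢(ψ Δ ψ') with ∑_{K ∈ C ∩ ψ} h(K) > ∑_{K' ∈ C ∩ ψ'} h(K'). Then ψ'' := (ψ' \ C) ∪ (C ∩ ψ) is a hard-core subset of φ with ψ' Δ ψ'' finite and ∑_{K ∈ ψ''\ψ'} h(K) > ∑_{K ∈ ψ'\ψ''} h(K), contradicting local h-maximality of ψ'. -/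
open scoped BigOperators symmDiff

/-- if `C` is a finite connected component of the contact graph of
`ψ ∆ ψ'` for two locally `h`-maximal thinnings `ψ, ψ'` and the aggregate `h`-value of
`C ∩ ψ` strictly exceeds that of `C ∩ ψ'`, then `ψ'' := (ψ' \ C) ∪ (C ∩ ψ)` is a
hard-core subset of `φ`, `ψ' ∆ ψ''` is finite, and `ψ''` has strictly larger swapped
`h`-value, contradicting local `h`-maximality of `ψ'` (whence `False`). -/
theorem finite_component_swap_contradiction {d : ℕ}
    (φ ψ ψ' : Set (Set (EuclideanSpace ℝ (Fin d))))
    (h : Set (EuclideanSpace ℝ (Fin d)) → ℝ) (hh : ∀ K, 0 ≤ h K)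
    (hψ : LocallyHMax h φ ψ) (hψ' : LocallyHMax h φ ψ')
    (K₀ : Set (EuclideanSpace ℝ (Fin d))) (hK₀ : K₀ ∈ ψ ∆ ψ')
    (C : Set (Set (EuclideanSpace ℝ (Fin d))))
    (hC : C = {L ∈ ψ ∆ ψ' | ContactConn (ψ ∆ ψ') K₀ L})
    (hCfin : C.Finite)
    (hsum : ∑ᶠ K ∈ (C ∩ ψ'), h K < ∑ᶠ K ∈ (C ∩ ψ), h K) :
    ((ψ' \ C) ∪ (C ∩ ψ)) ⊆ φ ∧
    HardCore ((ψ' \ C) ∪ (C ∩ ψ)) ∧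
    (ψ' ∆ ((ψ' \ C) ∪ (C ∩ ψ))).Finite ∧
    (∑ᶠ K ∈ (ψ' \ ((ψ' \ C) ∪ (C ∩ ψ))), h K <
      ∑ᶠ K ∈ (((ψ' \ C) ∪ (C ∩ ψ)) \ ψ'), h K) ∧
    False := by
  obtain ⟨hψφ, hψhc, hψmax⟩ := hψ
  obtain ⟨hψ'φ, hψ'hc, hψ'max⟩ := hψ'
  have hCsub : C ⊆ ψ ∆ ψ' := by rw [hC]; intro x hx; exact hx.1
  have hclose : ∀ L ∈ C, ∀ K ∈ ψ ∆ ψ', (L ∩ K).Nonempty → K ∈ C := by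
    intro L hL K hK hn
    rw [hC] at hL ⊢
    exact ⟨hK, hL.2.tail ⟨hL.1, hK, hn⟩⟩
  set ψ'' := (ψ' \ C) ∪ (C ∩ ψ) with hψ''def
  have hsub : ψ'' ⊆ φ := by
    rintro K (⟨hK, -⟩ | ⟨-, hK⟩)
    · exact hψ'φ hK
    · exact hψφ hK
  have hCψ' : ∀ x, x ∈ C → x ∈ ψ → x ∉ ψ' := by
    intro x hx hxψ hx'
    rcases Set.mem_symmDiff.mp (hCsub hx) with ⟨-, h2⟩ | ⟨-, h2⟩
    · exact h2 hx'
    · exact h2 hxψ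
  have hhc : HardCore ψ'' := by
    intro K hK L hL hne
    by_contra hint
    obtain ⟨x, hx⟩ := Set.nonempty_iff_ne_empty.mpr hint
    have hKL : (K ∩ L).Nonempty := ⟨x, interior_subset hx.1, interior_subset hx.2⟩
    have hLK : (L ∩ K).Nonempty := ⟨x, interior_subset hx.2, interior_subset hx.1⟩
    rcases hK with ⟨hK1, hK2⟩ | ⟨hK1, hK2⟩ <;> rcases hL with ⟨hL1, hL2⟩ | ⟨hL1, hL2⟩
    · exact hint (hψ'hc K hK1 L hL1 hne)
    · by_cases hKψ : K ∈ ψ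
      · exact hint (hψhc K hKψ L hL2 hne)
      · exact hK2 (hclose L hL1 K (Set.mem_symmDiff.mpr (Or.inr ⟨hK1, hKψ⟩)) hLK)
    · by_cases hLψ : L ∈ ψ
      · exact hint (hψhc K hK2 L hLψ hne)
      · exact hL2 (hclose K hK1 L (Set.mem_symmDiff.mpr (Or.inr ⟨hL1, hLψ⟩)) hKL)
    · exact hint (hψhc K hK2 L hL2 hne)
  have hd1 : ψ' \ ψ'' = C ∩ ψ' := by
    ext x
    simp only [hψ''def, Set.mem_diff, Set.mem_union, Set.mem_inter_iff, not_or, not_and]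
    constructor
    · rintro ⟨hx1, h2, h3⟩
      by_cases hxC : x ∈ C
      · exact ⟨hxC, hx1⟩
      · exact (h2 hx1 hxC).elim
    · rintro ⟨hxC, hx'⟩
      exact ⟨hx', fun _ hc => hc hxC, fun _ hxψ => hCψ' x hxC hxψ hx'⟩
  have hd2 : ψ'' \ ψ' = C ∩ ψ := by
    ext x
    simp only [hψ''def, Set.mem_diff, Set.mem_union, Set.mem_inter_iff]
    constructor
    · rintro ⟨(⟨h1, -⟩ | ⟨h1, h2⟩), hx'⟩
      · exact absurd h1 hx'
      · exact ⟨h1, h2⟩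
    · rintro ⟨h1, h2⟩
      exact ⟨Or.inr ⟨h1, h2⟩, hCψ' x h1 h2⟩
  have hseq : ψ' ∆ ψ'' = (C ∩ ψ') ∪ (C ∩ ψ) := by
    rw [Set.symmDiff_def, hd1, hd2]
  have hfin : (ψ' ∆ ψ'').Finite := by
    rw [hseq]
    exact hCfin.subset (Set.union_subset (Set.inter_subset_left) (Set.inter_subset_left))
  have hsum' : ∑ᶠ K ∈ (ψ' \ ψ''), h K < ∑ᶠ K ∈ (ψ'' \ ψ'), h K := by
    rw [hd1, hd2]; exact hsum
  have hne : ψ'' ≠ ψ' := by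
    intro heq
    have h0 : C ∩ ψ = (∅ : Set (Set (EuclideanSpace ℝ (Fin d)))) := by
      rw [← hd2, heq, Set.diff_self]
    have h0' : C ∩ ψ' = (∅ : Set (Set (EuclideanSpace ℝ (Fin d)))) := by
      rw [← hd1, heq, Set.diff_self]
    rw [h0, h0', finsum_mem_empty] at hsum
    exact lt_irrefl _ hsum
  have := hψ'max ψ'' hsub hhc hfin hne
  rw [hd1, hd2] at this
  exact ⟨hsub, hhc, hfin, hsum', absurd hsum (not_lt.mpr this.le)⟩
end
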